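/- arXiv:math/0008022 — 2 statements merged into one kernel-verified Lean document; each statement's English description precedes it below -/
import Mathlib

section
/- For any two linear partitions a and b (finitely supported weakly decreasing sequences of natural numbers), there exists a unique linear partition c whose suffix sums are the pointwise maximum of those of a and b: Σ_{j≥i} c_j = max(Σ_{j≥i} a_j, Σ_{j≥i} b_j) for all i ≥ 1. (Equivalently, the pointwise maximum m(i) = max(Σ_{j≥i} a_j, Σ_{j≥i} b_j) satisfies that the difference sequence m(i) − m(i+1) is nonnegative and weakly decreasing in i and m is eventually zero.) -/
/-- Suffix finsum equals a finite `Ico` sum once the sequence vanishes. -/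
lemma suffix_finsum_eq_sum (a : ℕ → ℕ) (N : ℕ) (h : ∀ m ≥ N, a m = 0) (i : ℕ) :
    ∑ᶠ j ∈ Set.Ici i, a j = ∑ j ∈ Finset.Ico i N, a j := by
  apply finsum_mem_eq_sum_of_inter_support_eq
  ext x
  simp only [Set.mem_inter_iff, Set.mem_Ici, Function.mem_support,
    Finset.coe_Ico, Set.mem_Ico]
  constructor
  · rintro ⟨hx, hx0⟩
    have : x < N := by by_contra h'; exact hx0 (h x (by omega))
    exact ⟨⟨hx, this⟩, hx0⟩
  · rintro ⟨⟨hx, _⟩, hx0⟩; exact ⟨hx, hx0⟩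

/-- Recurrence for suffix sums. -/
lemma suffix_finsum_rec (a : ℕ → ℕ) (N : ℕ) (h : ∀ m ≥ N, a m = 0) (i : ℕ) :
    ∑ᶠ j ∈ Set.Ici i, a j = a i + ∑ᶠ j ∈ Set.Ici (i + 1), a j := by
  rw [suffix_finsum_eq_sum a N h i, suffix_finsum_eq_sum a N h (i + 1)]
  rcases lt_or_ge i N with hi | hi
  · exact Finset.sum_eq_sum_Ico_succ_bot hi a
  · rw [Finset.Ico_eq_empty (by omega), Finset.Ico_eq_empty (by omega),
      h i hi]
    simp

/-- For any two linear partitions `a` and `b` (finitely supported weakly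
decreasing sequences of naturals), there exists a unique linear partition `c`
whose suffix sums are the pointwise maximum of those of `a` and `b`:
`∑_{j≥i} c j = max (∑_{j≥i} a j) (∑_{j≥i} b j)` for all `i`. -/
theorem exists_unique_partition_with_suffix_sums_max (a b : ℕ → ℕ)
    (ha : Antitone a) (ha0 : ∃ N, ∀ m ≥ N, a m = 0)
    (hb : Antitone b) (hb0 : ∃ N, ∀ m ≥ N, b m = 0) :
    ∃! c : ℕ → ℕ, (Antitone c ∧ ∃ N, ∀ m ≥ N, c m = 0) ∧
      ∀ i, ∑ᶠ j ∈ Set.Ici i, c j =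
        max (∑ᶠ j ∈ Set.Ici i, a j) (∑ᶠ j ∈ Set.Ici i, b j) := by
  obtain ⟨Na, hNa⟩ := ha0
  obtain ⟨Nb, hNb⟩ := hb0
  set Sa : ℕ → ℕ := fun i => ∑ᶠ j ∈ Set.Ici i, a j with hSa
  set Sb : ℕ → ℕ := fun i => ∑ᶠ j ∈ Set.Ici i, b j with hSb
  set m : ℕ → ℕ := fun i => max (Sa i) (Sb i) with hm
  have hSarec : ∀ i, Sa i = a i + Sa (i + 1) := fun i =>
    suffix_finsum_rec a Na hNa i
  have hSbrec : ∀ i, Sb i = b i + Sb (i + 1) := fun i =>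
    suffix_finsum_rec b Nb hNb i
  set M0 := max Na Nb with hM0
  have hSa0 : ∀ k ≥ M0, Sa k = 0 := by
    intro k hk
    rw [hSa]
    simp only
    rw [suffix_finsum_eq_sum a Na hNa k, Finset.Ico_eq_empty (by omega)]
    rfl
  have hSb0 : ∀ k ≥ M0, Sb k = 0 := by
    intro k hk
    rw [hSb]
    simp only
    rw [suffix_finsum_eq_sum b Nb hNb k, Finset.Ico_eq_empty (by omega)]
    rfl
  have hm0 : ∀ k ≥ M0, m k = 0 := by
    intro k hk; rw [hm]; simp [hSa0 k hk, hSb0 k hk]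
  -- m is antitone (step)
  have hmstep : ∀ i, m (i + 1) ≤ m i := by
    intro i
    have h1 := hSarec i
    have h2 := hSbrec i
    simp only [hm, max_le_iff, le_max_iff]
    omega
  have hmanti : Antitone m := antitone_nat_of_succ_le hmstep
  -- convexity: m i + m (i+2) ≥ 2 * m (i+1)
  have hconv : ∀ i, m (i + 1) + m (i + 1) ≤ m i + m (i + 2) := by
    intro i
    have ha1 := hSarec i
    have ha2 := hSarec (i + 1)
    have hb1 := hSbrec i
    have hb2 := hSbrec (i + 1)
    have haa : a (i + 1) ≤ a i := ha (by omega)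
    have hbb : b (i + 1) ≤ b i := hb (by omega)
    simp only [hm, le_max_iff, max_le_iff] at *
    rcases max_cases (Sa (i + 1)) (Sb (i + 1)) with ⟨he, _⟩ | ⟨he, _⟩ <;>
      rw [show i + 1 + 1 = i + 2 from rfl] at * <;> omega
  set c : ℕ → ℕ := fun i => m i - m (i + 1) with hc
  have hcanti : Antitone c := by
    apply antitone_nat_of_succ_le
    intro i
    have h1 := hconv i
    have h2 := hmstep i
    have h3 := hmstep (i + 1)
    simp only [hc, show i + 1 + 1 = i + 2 from rfl] at *
    omega
  have hc0 : ∀ k ≥ M0, c k = 0 := by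
    intro k hk
    simp only [hc]
    rw [hm0 k hk]
    omega
  -- telescoping
  have htel : ∀ M i, i ≤ M → ∑ j ∈ Finset.Ico i M, c j = m i - m M := by
    intro M
    induction M with
    | zero => intro i hi; interval_cases i; simp
    | succ M ih =>
      intro i hi
      rcases eq_or_lt_of_le hi with rfl | hlt
      · simp
      · have hiM : i ≤ M := by omega
        rw [Finset.sum_Ico_succ_top hiM, ih i hiM]
        have h1 : m M ≤ m i := hmanti hiM
        have h2 := hmstep M
        simp only [hc]
        omega
  have hcsum : ∀ i, ∑ᶠ j ∈ Set.Ici i, c j = m i := by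
    intro i
    have hbound : ∀ k ≥ max (i) M0, c k = 0 := fun k hk => hc0 k (by omega)
    rw [suffix_finsum_eq_sum c (max i M0) hbound i,
      htel (max i M0) i (le_max_left _ _),
      hm0 (max i M0) (le_max_right _ _)]
    omega
  refine ⟨c, ⟨⟨hcanti, ⟨M0, hc0⟩⟩, fun i => hcsum i⟩, ?_⟩
  rintro c' ⟨⟨hc'anti, ⟨N', hN'⟩⟩, hc'sum⟩
  funext i
  have h1 : ∑ᶠ j ∈ Set.Ici i, c' j = max (Sa i) (Sb i) := hc'sum i
  have h2 : ∑ᶠ j ∈ Set.Ici (i + 1), c' j = max (Sa (i + 1)) (Sb (i + 1)) :=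
    hc'sum (i + 1)
  have hrec := suffix_finsum_rec c' N' hN' i
  have h3 := hmstep i
  simp only [hc]
  simp only [hm] at *
  omega
end

section
/- Let a and b be linear partitions of the same integer n. Then the linear partition c determined by Σ_{j≥i} c_j = max(Σ_{j≥i} a_j, Σ_{j≥i} b_j) for all i is again a partition of n, and c is the greatest lower bound of a and b in the dominance order on partitions of n: c ⊴ a, c ⊴ b, and every partition d of n with d ⊴ a and d ⊴ b satisfies d ⊴ c. -/
private lemma suffix_eq_Ico (f : ℕ → ℕ) (N : ℕ) (hN : ∀ m ≥ N, f m = 0) (i : ℕ) :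
    ∑ᶠ j ∈ Set.Ici i, f j = ∑ j ∈ Finset.Ico i N, f j := by
  apply finsum_mem_eq_sum_of_inter_support_eq
  ext x
  simp only [Set.mem_inter_iff, Set.mem_Ici, Function.mem_support, Finset.coe_Ico,
    Set.mem_Ico]
  constructor
  · rintro ⟨hx, hfx⟩
    refine ⟨⟨hx, ?_⟩, hfx⟩
    by_contra h
    exact hfx (hN x (le_of_not_gt h))
  · rintro ⟨⟨hx, _⟩, hfx⟩; exact ⟨hx, hfx⟩

private lemma total_eq_range (f : ℕ → ℕ) (N : ℕ) (hN : ∀ m ≥ N, f m = 0) :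
    ∑ᶠ j, f j = ∑ j ∈ Finset.range N, f j := by
  apply finsum_eq_sum_of_support_subset
  intro x hx
  simp only [Function.mem_support] at hx
  simp only [Finset.coe_range, Set.mem_Iio]
  by_contra h
  exact hx (hN x (le_of_not_gt h))

/-- Let `a` and `b` be linear partitions of the same integer `n`, and let `c`
be the linear partition whose suffix sums are the pointwise maximum of those
of `a` and `b`. Then `c` is again a partition of `n`, and `c` is the greatest
lower bound of `a` and `b` in the dominance order: `c ⊴ a`, `c ⊴ b`, and any
partition `d` of `n` with `d ⊴ a` and `d ⊴ b` satisfies `d ⊴ c`. -/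
theorem inf_dominance_via_suffix_sums {n : ℕ} (a b c : ℕ → ℕ)
    (ha : Antitone a) (ha0 : ∃ N, ∀ m ≥ N, a m = 0) (hasum : ∑ᶠ i, a i = n)
    (hb : Antitone b) (hb0 : ∃ N, ∀ m ≥ N, b m = 0) (hbsum : ∑ᶠ i, b i = n)
    (hc : Antitone c) (hc0 : ∃ N, ∀ m ≥ N, c m = 0)
    (hcmax : ∀ i, ∑ᶠ j ∈ Set.Ici i, c j =
      max (∑ᶠ j ∈ Set.Ici i, a j) (∑ᶠ j ∈ Set.Ici i, b j)) :
    (∑ᶠ i, c i = n) ∧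
    (∀ k, ∑ i ∈ Finset.range k, c i ≤ ∑ i ∈ Finset.range k, a i) ∧
    (∀ k, ∑ i ∈ Finset.range k, c i ≤ ∑ i ∈ Finset.range k, b i) ∧
    (∀ d : ℕ → ℕ, Antitone d → (∃ N, ∀ m ≥ N, d m = 0) → (∑ᶠ i, d i = n) →
      (∀ k, ∑ i ∈ Finset.range k, d i ≤ ∑ i ∈ Finset.range k, a i) →
      (∀ k, ∑ i ∈ Finset.range k, d i ≤ ∑ i ∈ Finset.range k, b i) →
      ∀ k, ∑ i ∈ Finset.range k, d i ≤ ∑ i ∈ Finset.range k, c i) := by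
  obtain ⟨Na, hNa⟩ := ha0
  obtain ⟨Nb, hNb⟩ := hb0
  obtain ⟨Nc, hNc⟩ := hc0
  -- key fact: prefix sums of c are min of prefix sums of a, b
  have key : ∀ k, ∑ i ∈ Finset.range k, c i =
      min (∑ i ∈ Finset.range k, a i) (∑ i ∈ Finset.range k, b i) := by
    intro k
    set N := max (max Na (max Nb Nc)) k with hNdef
    have hkN : k ≤ N := le_max_right _ _
    have hNa' : ∀ m ≥ N, a m = 0 := fun m hm => hNa m (le_trans (le_trans (le_max_left _ _) (le_max_left _ _)) hm)
    have hNb' : ∀ m ≥ N, b m = 0 := fun m hm => hNb m (le_trans (le_trans (le_trans (le_max_left _ _) (le_max_right _ _)) (le_max_left _ _)) hm)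
    have hNc' : ∀ m ≥ N, c m = 0 := fun m hm => hNc m (le_trans (le_trans (le_trans (le_max_right _ _) (le_max_right _ _)) (le_max_left _ _)) hm)
    have hsplit : ∀ f : ℕ → ℕ,
        ∑ i ∈ Finset.range k, f i + ∑ i ∈ Finset.Ico k N, f i = ∑ i ∈ Finset.range N, f i := by
      intro f
      simp only [Finset.range_eq_Ico]
      exact Finset.sum_Ico_consecutive f (Nat.zero_le k) hkN
    have hta := total_eq_range a N hNa'
    have htb := total_eq_range b N hNb'
    have htc := total_eq_range c N hNc'
    have hsa := suffix_eq_Ico a N hNa' k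
    have hsb := suffix_eq_Ico b N hNb' k
    have hsc := suffix_eq_Ico c N hNc' k
    have hmc := hcmax k
    have hm0 := hcmax 0
    have hs0a := suffix_eq_Ico a N hNa' 0
    have hs0b := suffix_eq_Ico b N hNb' 0
    have hs0c := suffix_eq_Ico c N hNc' 0
    have h0 : Finset.Ico 0 N = Finset.range N := by rw [Finset.range_eq_Ico]
    rw [hsa, hsb, hsc] at hmc
    rw [hs0a, hs0b, hs0c, h0, ← hta, ← htb, ← htc, hasum, hbsum, max_self] at hm0
    have hca := hsplit a
    have hcb := hsplit b
    have hcc := hsplit c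
    rw [← hta, hasum] at hca
    rw [← htb, hbsum] at hcb
    rw [← htc, hm0] at hcc
    omega
  have hcsum : ∑ᶠ i, c i = n := by
    have hm0 := hcmax 0
    have h0 : Set.Ici 0 = (Set.univ : Set ℕ) := by ext x; simp
    rw [h0, finsum_mem_univ, finsum_mem_univ, finsum_mem_univ, hasum, hbsum, max_self] at hm0
    exact hm0
  refine ⟨hcsum, fun k => ?_, fun k => ?_, fun d _ _ _ hda hdb k => ?_⟩
  · rw [key k]; exact min_le_left _ _
  · rw [key k]; exact min_le_right _ _
  · rw [key k]; exact le_min (hda k) (hdb k)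
end
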